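/- (Reflection for HT probabilities.) Let ℛ be a (synchronous or asynchronous) system in which the agent has perfect recall, let Pr be a probability measure on ℛ with Pr({r'}) > 0 for every run r', let (r,0) be a point and m a time, and let K(r₁,m), …, K(r_k,m) be the distinct information sets of the form K(r',m) for r' ∈ ℛ(K(r,0)). Then there exist nonnegative reals α₁, …, α_k with Σ_{j=1}^k α_j = 1 such that for every set of runs ℛ' ⊆ ℛ: Pr^HT_{(r,0)}(K(r,0)(ℛ')) = Σ_{j=1}^k α_j · Pr^HT_{(r_j,m)}(K(r_j,m)(ℛ')), where Pr^HT_{(r,m)}(K(r,m)(ℛ')) denotes Pr(ℛ' ∩ ℛ(K(r,m))) / Pr(ℛ(K(r,m))). -/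

import Mathlib

open scoped Classical

namespace SBP

variable {L : Type*}

/-- A point: a run together with a time. -/
abbrev Point (L : Type*) := (ℕ → L) × ℕ

/-- The information set `K(r,m)`: all points `(r',m')` with `r' ∈ ℛ` and `r' m' = r m`. -/
def K (ℛ : Finset (ℕ → L)) (r : ℕ → L) (m : ℕ) : Set (Point L) :=
  {p | p.1 ∈ ℛ ∧ p.1 p.2 = r m}

/-- `ℛ(U)`: the runs of `ℛ` passing through some point of `U`. -/
noncomputable def runsOf (ℛ : Finset (ℕ → L)) (U : Set (Point L)) : Finset (ℕ → L) :=
  ℛ.filter fun r' => ∃ m', (r', m') ∈ U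

/-- A system is synchronous if indistinguishable points occur at the same time. -/
def Synchronous (ℛ : Finset (ℕ → L)) : Prop :=
  ∀ r ∈ ℛ, ∀ r' ∈ ℛ, ∀ m m' : ℕ, r m = r' m' → m = m'

/-- The local-state sequence of run `r` at time `m`:
`r 0, r 1, …, r m` with consecutive repetitions removed. -/
noncomputable def lseq (r : ℕ → L) (m : ℕ) : List L :=
  ((List.range (m + 1)).map r).destutter (· ≠ ·)

/-- Perfect recall: indistinguishable points have the same local-state sequence. -/
def PerfectRecall (ℛ : Finset (ℕ → L)) : Prop :=
  ∀ r ∈ ℛ, ∀ r' ∈ ℛ, ∀ m m' : ℕ, r m = r' m' → lseq r m = lseq r' m'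

/-- A run-based event: contains all points of a run or none of them. -/
def RunBased (U : Set (Point L)) : Prop :=
  ∀ (r' : ℕ → L) (k k' : ℕ), (r', k) ∈ U → (r', k') ∈ U

/-- The probability of a (finite) set of runs. -/
noncomputable def PrS (pr : (ℕ → L) → ℝ) (S : Finset (ℕ → L)) : ℝ := ∑ r ∈ S, pr r

/-- `n_{(r,m)}(r')`: the number of points of the information set `K(r,m)` lying on run `r'`. -/
noncomputable def npts (r : ℕ → L) (m : ℕ) (r' : ℕ → L) : ℕ :=
  Nat.card {k : ℕ | r' k = r m}

/-- The Elga probability of a single point, for the agent at the point `(r,m)`. -/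
noncomputable def elga (ℛ : Finset (ℕ → L)) (pr : (ℕ → L) → ℝ) (r : ℕ → L) (m : ℕ)
    (p : Point L) : ℝ :=
  if p ∈ K ℛ r m then
    pr p.1 / ∑ r'' ∈ runsOf ℛ (K ℛ r m), pr r'' * (npts r m r'' : ℝ)
  else 0

/-- `Pr^HT_{(r,m)}(K(r,m)(ℛ')) = Pr(ℛ' ∩ ℛ(K(r,m))) / Pr(ℛ(K(r,m)))`. -/
noncomputable def prHTrun (ℛ : Finset (ℕ → L)) (pr : (ℕ → L) → ℝ) (r : ℕ → L) (m : ℕ)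
    (S : Finset (ℕ → L)) : ℝ :=
  PrS pr (S ∩ runsOf ℛ (K ℛ r m)) / PrS pr (runsOf ℛ (K ℛ r m))


lemma destutter'_concat {α : Type*} (R : α → α → Prop) [DecidableRel R]
    (hR : ∀ x y, ¬ R x y → x = y) :
    ∀ (l : List α) (b a : α), (l ++ [a]).destutter' R b =
      if R (l.getLast?.getD b) a then l.destutter' R b ++ [a] else l.destutter' R b := by
  intro l
  induction l with
  | nil =>
      intro b a
      simp [List.destutter'_singleton, List.destutter'_nil]
      congr
  | cons c l ih =>
      intro b a
      rw [List.cons_append, List.destutter'_cons, List.destutter'_cons]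
      by_cases h : R b c
      · rw [if_pos h, if_pos h, ih c a]
        simp only [List.getLast?_cons, Option.getD_some]
        split_ifs <;> simp
      · have hbc : b = c := hR _ _ h
        subst hbc
        rw [if_neg h, if_neg h, ih b a]
        simp only [List.getLast?_cons, Option.getD_some]

lemma destutter_concat {α : Type*} (R : α → α → Prop) [DecidableRel R]
    (hR : ∀ x y, ¬ R x y → x = y) (l : List α) (a x : α) (hx : l.getLast? = some x) :
    (l ++ [a]).destutter R = if R x a then l.destutter R ++ [a] else l.destutter R := by
  cases l with
  | nil => simp at hx
  | cons b l' =>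
      rw [List.cons_append, List.destutter_cons', List.destutter_cons',
        destutter'_concat R hR l' b a]
      rw [List.getLast?_cons] at hx
      rw [Option.some.injEq] at hx
      rw [hx]

lemma lseq_succ (r : ℕ → L) (m : ℕ) :
    lseq r (m + 1) = if r m ≠ r (m+1) then lseq r m ++ [r (m+1)] else lseq r m := by
  unfold lseq
  rw [List.range_succ, List.map_append, List.map_singleton]
  exact destutter_concat _ (fun x y h => by simpa using h) _ _ (r m)
    (by rw [List.range_succ, List.map_append, List.map_singleton, List.getLast?_concat])

lemma lseq_zero (r : ℕ → L) : lseq r 0 = [r 0] := by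
  unfold lseq
  simp [List.range_succ]

lemma lseq_getLast? (r : ℕ → L) (m : ℕ) : (lseq r m).getLast? = some (r m) := by
  induction m with
  | zero => simp [lseq_zero]
  | succ n ih =>
      rw [lseq_succ]
      split_ifs with h
      · exact List.getLast?_concat
      · rw [not_not] at h; rw [ih, h]

lemma lseq_ne_nil (r : ℕ → L) (m : ℕ) : lseq r m ≠ [] := by
  intro h
  have := lseq_getLast? r m
  rw [h] at this
  simp at this

lemma lseq_head? (r : ℕ → L) (m : ℕ) : (lseq r m).head? = some (r 0) := by
  induction m with
  | zero => simp [lseq_zero]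
  | succ n ih =>
      rw [lseq_succ]
      split_ifs with h
      · rw [List.head?_append, ih]; rfl
      · exact ih

lemma lseq_prefix (r : ℕ → L) {m m' : ℕ} (h : m ≤ m') : lseq r m <+: lseq r m' := by
  induction m' with
  | zero => rw [Nat.le_zero.mp h]
  | succ n ih =>
      rcases eq_or_lt_of_le h with h' | h'
      · rw [h']
      · refine (ih (Nat.lt_succ_iff.mp h')).trans ?_
        rw [lseq_succ]
        split_ifs
        · exact List.prefix_append _ _
        · exact List.prefix_refl _


lemma lseq_prefix_exists (r : ℕ → L) (m : ℕ) :
    ∀ p : List L, p ≠ [] → p <+: lseq r m → ∃ t, lseq r t = p := by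
  induction m with
  | zero =>
      intro p hp hpre
      rw [lseq_zero] at hpre
      have hlen : (lseq r 0).length ≤ p.length := by
        rw [lseq_zero]
        cases p with
        | nil => exact absurd rfl hp
        | cons a l => simp [Nat.succ_le_succ, Nat.zero_le]
      rw [lseq_zero] at hlen
      exact ⟨0, by rw [lseq_zero, (hpre.eq_of_length_le hlen)]⟩
  | succ n ih =>
      intro p hp hpre
      rw [lseq_succ] at hpre
      split_ifs at hpre with h
      · rcases List.prefix_concat_iff.mp hpre with h' | h'
        · exact ⟨n + 1, by rw [lseq_succ, if_pos h, h']⟩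
        · exact ih p hp h'
      · exact ih p hp hpre

/-- Reflection for HT probabilities: the HT probability at `(r,0)` of the points on a set
of runs `ℛ'` is a convex combination of the later HT probabilities of those points. -/
theorem reflection_HT (ℛ : Finset (ℕ → L)) (hne : ℛ.Nonempty)
    (hrec : PerfectRecall ℛ)
    (pr : (ℕ → L) → ℝ) (hpos : ∀ r' ∈ ℛ, 0 < pr r') (hsum : ∑ r' ∈ ℛ, pr r' = 1)
    (r : ℕ → L) (hr : r ∈ ℛ) (m : ℕ)
    (k : ℕ) (rs : Fin k → ℕ → L)
    (hmem : ∀ j : Fin k, rs j ∈ runsOf ℛ (K ℛ r 0))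
    (hdist : Function.Injective fun j : Fin k => K ℛ (rs j) m)
    (hall : ∀ r' ∈ runsOf ℛ (K ℛ r 0), ∃ j : Fin k, K ℛ r' m = K ℛ (rs j) m) :
    ∃ α : Fin k → ℝ, (∀ j : Fin k, 0 ≤ α j) ∧ (∑ j : Fin k, α j = 1) ∧
      ∀ ℛ₀ : Finset (ℕ → L), ℛ₀ ⊆ ℛ →
        prHTrun ℛ pr r 0 ℛ₀ =
          ∑ j : Fin k, α j * prHTrun ℛ pr (rs j) m ℛ₀ := by
  classical
  -- membership characterizations
  have memW : ∀ s, s ∈ runsOf ℛ (K ℛ r 0) ↔ s ∈ ℛ ∧ ∃ t, s t = r 0 := by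
    intro s
    constructor
    · intro h
      rw [runsOf, Finset.mem_filter] at h
      exact ⟨h.1, h.2.choose, (h.2.choose_spec).2⟩
    · rintro ⟨hs, t, ht⟩
      rw [runsOf, Finset.mem_filter]
      exact ⟨hs, t, hs, ht⟩
  have memRj : ∀ (j : Fin k) s, s ∈ runsOf ℛ (K ℛ (rs j) m) ↔ s ∈ ℛ ∧ ∃ t, s t = rs j m := by
    intro j s
    constructor
    · intro h
      rw [runsOf, Finset.mem_filter] at h
      exact ⟨h.1, h.2.choose, (h.2.choose_spec).2⟩
    · rintro ⟨hs, t, ht⟩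
      rw [runsOf, Finset.mem_filter]
      exact ⟨hs, t, hs, ht⟩
  have hrs_mem : ∀ j, rs j ∈ ℛ := fun j => ((memW _).mp (hmem j)).1
  have hrs0 : ∀ j, rs j 0 = r 0 := by
    intro j
    obtain ⟨hj, t, ht⟩ := (memW _).mp (hmem j)
    have h1 : lseq (rs j) t = lseq r 0 := hrec _ hj _ hr _ _ ht
    have h2 := lseq_head? (rs j) t
    rw [h1, lseq_zero] at h2
    simpa using h2.symm
  -- the local-state sequences of the distinguished points
  set σ : Fin k → List L := fun j => lseq (rs j) m with hσ
  have charRj : ∀ (j : Fin k) s, s ∈ runsOf ℛ (K ℛ (rs j) m) ↔ s ∈ ℛ ∧ ∃ t, lseq s t = σ j := by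
    intro j s
    rw [memRj]
    constructor
    · rintro ⟨hs, t, ht⟩
      exact ⟨hs, t, hrec _ hs _ (hrs_mem j) _ _ ht⟩
    · rintro ⟨hs, t, ht⟩
      refine ⟨hs, t, ?_⟩
      have h1 := lseq_getLast? s t
      rw [ht, hσ, lseq_getLast?] at h1
      simpa using h1.symm
  have RjW : ∀ j : Fin k, runsOf ℛ (K ℛ (rs j) m) ⊆ runsOf ℛ (K ℛ r 0) := by
    intro j s hs
    obtain ⟨hsR, t, ht⟩ := (charRj j s).mp hs
    have h1 := lseq_head? s t
    rw [ht, hσ, lseq_head?, hrs0 j] at h1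
    exact (memW s).mpr ⟨hsR, 0, by simpa using h1.symm⟩
  have σ_inj : Function.Injective σ := by
    intro i j hij
    have h1 := lseq_getLast? (rs i) m
    rw [show lseq (rs i) m = σ i from rfl, hij, hσ, lseq_getLast?] at h1
    have h2 : rs i m = rs j m := by simpa using h1.symm
    apply hdist
    simp only [K, h2]
  have Kmval : ∀ s ∈ ℛ, ∀ j : Fin k, K ℛ s m = K ℛ (rs j) m → s m = rs j m := by
    intro s hs j h
    have : (s, m) ∈ K ℛ s m := ⟨hs, rfl⟩
    rw [h] at this
    exact this.2
  -- the minimal indices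
  set M : Finset (Fin k) := Finset.univ.filter (fun j => ∀ i, σ i <+: σ j → i = j) with hM
  have huniq : ∀ s ∈ runsOf ℛ (K ℛ r 0),
      ∃! j : Fin k, j ∈ M ∧ s ∈ runsOf ℛ (K ℛ (rs j) m) := by
    intro s hsW
    have hsR : s ∈ ℛ := ((memW s).mp hsW).1
    -- uniqueness helper
    have key : ∀ j₁ j₂ : Fin k, (j₁ ∈ M ∧ s ∈ runsOf ℛ (K ℛ (rs j₁) m)) →
        (j₂ ∈ M ∧ s ∈ runsOf ℛ (K ℛ (rs j₂) m)) → j₁ = j₂ := by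
      rintro j₁ j₂ ⟨hM₁, hs₁⟩ ⟨hM₂, hs₂⟩
      obtain ⟨-, t₁, ht₁⟩ := (charRj j₁ s).mp hs₁
      obtain ⟨-, t₂, ht₂⟩ := (charRj j₂ s).mp hs₂
      rw [hM] at hM₁ hM₂
      rcases le_total t₁ t₂ with hle | hle
      · have : σ j₁ <+: σ j₂ := by rw [← ht₁, ← ht₂]; exact lseq_prefix s hle
        exact (Finset.mem_filter.mp hM₂).2 j₁ this
      · have : σ j₂ <+: σ j₁ := by rw [← ht₁, ← ht₂]; exact lseq_prefix s hle
        exact ((Finset.mem_filter.mp hM₁).2 j₂ this).symm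
    -- existence
    obtain ⟨j, hKj⟩ := hall s hsW
    have hsj : s ∈ runsOf ℛ (K ℛ (rs j) m) :=
      (memRj j s).mpr ⟨hsR, m, Kmval s hsR j hKj⟩
    have hJne : (Finset.univ.filter (fun i => s ∈ runsOf ℛ (K ℛ (rs i) m))).Nonempty :=
      ⟨j, by simp [hsj]⟩
    obtain ⟨j₀, hj₀, hmin⟩ := Finset.exists_min_image _ (fun i => (σ i).length) hJne
    have hj₀s : s ∈ runsOf ℛ (K ℛ (rs j₀) m) := (Finset.mem_filter.mp hj₀).2
    have hj₀M : j₀ ∈ M := by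
      rw [hM, Finset.mem_filter]
      refine ⟨Finset.mem_univ _, ?_⟩
      intro i hi
      obtain ⟨-, t, ht⟩ := (charRj j₀ s).mp hj₀s
      have hi' : σ i <+: lseq s t := by rw [ht]; exact hi
      obtain ⟨t', ht'⟩ := lseq_prefix_exists s t (σ i) (lseq_ne_nil _ _) hi'
      have hiJ : i ∈ Finset.univ.filter (fun i => s ∈ runsOf ℛ (K ℛ (rs i) m)) := by
        simp only [Finset.mem_filter, Finset.mem_univ, true_and]
        exact (charRj i s).mpr ⟨hsR, t', ht'⟩
      have hlen := hmin i hiJ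
      exact σ_inj (hi.eq_of_length_le hlen)
    exact ⟨j₀, ⟨hj₀M, hj₀s⟩, fun j' hj' => key j' j₀ hj' ⟨hj₀M, hj₀s⟩⟩
  -- positivity
  have PrS_pos : ∀ S : Finset (ℕ → L), S ⊆ ℛ → S.Nonempty → 0 < PrS pr S := by
    intro S hS hSne
    exact Finset.sum_pos (fun i hi => hpos i (hS hi)) hSne
  have hWpos : 0 < PrS pr (runsOf ℛ (K ℛ r 0)) :=
    PrS_pos _ (Finset.filter_subset _ _) ⟨r, (memW r).mpr ⟨hr, 0, rfl⟩⟩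
  have hRjpos : ∀ j : Fin k, 0 < PrS pr (runsOf ℛ (K ℛ (rs j) m)) := fun j =>
    PrS_pos _ (Finset.filter_subset _ _) ⟨rs j, (memRj j _).mpr ⟨hrs_mem j, m, rfl⟩⟩
  -- the counting identity
  have hcount : ∀ T : Finset (ℕ → L), T ⊆ ℛ →
      ∑ j ∈ M, PrS pr (T ∩ runsOf ℛ (K ℛ (rs j) m)) = PrS pr (T ∩ runsOf ℛ (K ℛ r 0)) := by
    intro T hT
    have expand : ∀ X : Finset (ℕ → L),
        PrS pr (T ∩ X) = ∑ s ∈ T, if s ∈ X then pr s else 0 := by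
      intro X
      rw [PrS, ← Finset.sum_ite_mem]
    calc ∑ j ∈ M, PrS pr (T ∩ runsOf ℛ (K ℛ (rs j) m))
        = ∑ j ∈ M, ∑ s ∈ T, (if s ∈ runsOf ℛ (K ℛ (rs j) m) then pr s else 0) := by
          exact Finset.sum_congr rfl fun j _ => expand _
      _ = ∑ s ∈ T, ∑ j ∈ M, (if s ∈ runsOf ℛ (K ℛ (rs j) m) then pr s else 0) :=
          Finset.sum_comm
      _ = ∑ s ∈ T, (if s ∈ runsOf ℛ (K ℛ r 0) then pr s else 0) := by
          refine Finset.sum_congr rfl fun s _ => ?_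
          by_cases hsW : s ∈ runsOf ℛ (K ℛ r 0)
          · obtain ⟨j₀, hj₀, huq⟩ := huniq s hsW
            rw [if_pos hsW, Finset.sum_eq_single_of_mem j₀ hj₀.1]
            · rw [if_pos hj₀.2]
            · intro b hb hne
              rw [if_neg]
              intro hsb
              exact hne (huq b ⟨hb, hsb⟩)
          · rw [if_neg hsW]
            refine Finset.sum_eq_zero fun j hj => ?_
            rw [if_neg fun hsRj => hsW (RjW j hsRj)]
      _ = PrS pr (T ∩ runsOf ℛ (K ℛ r 0)) := (expand _).symm
  -- the coefficients
  refine ⟨fun j => if j ∈ M then PrS pr (runsOf ℛ (K ℛ (rs j) m)) / PrS pr (runsOf ℛ (K ℛ r 0))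
      else 0, ?_, ?_, ?_⟩
  · intro j
    dsimp only
    split_ifs
    · exact div_nonneg (le_of_lt (hRjpos j)) (le_of_lt hWpos)
    · exact le_rfl
  · rw [Finset.sum_ite_mem, Finset.univ_inter, ← Finset.sum_div]
    have h1 : ∑ j ∈ M, PrS pr (runsOf ℛ (K ℛ (rs j) m)) = PrS pr (runsOf ℛ (K ℛ r 0)) := by
      have e1 : ℛ ∩ runsOf ℛ (K ℛ r 0) = runsOf ℛ (K ℛ r 0) :=
        Finset.inter_eq_right.mpr (Finset.filter_subset _ _)
      have e2 : ∀ j : Fin k, ℛ ∩ runsOf ℛ (K ℛ (rs j) m) = runsOf ℛ (K ℛ (rs j) m) :=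
        fun j => Finset.inter_eq_right.mpr (Finset.filter_subset _ _)
      calc ∑ j ∈ M, PrS pr (runsOf ℛ (K ℛ (rs j) m))
          = ∑ j ∈ M, PrS pr (ℛ ∩ runsOf ℛ (K ℛ (rs j) m)) := by
            exact Finset.sum_congr rfl fun j _ => by rw [e2 j]
        _ = PrS pr (ℛ ∩ runsOf ℛ (K ℛ r 0)) := hcount ℛ (subset_refl _)
        _ = PrS pr (runsOf ℛ (K ℛ r 0)) := by rw [e1]
    rw [h1, div_self (ne_of_gt hWpos)]
  · intro ℛ₀ h₀
    rw [prHTrun]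
    have : ∀ j : Fin k,
        (if j ∈ M then PrS pr (runsOf ℛ (K ℛ (rs j) m)) / PrS pr (runsOf ℛ (K ℛ r 0)) else 0) *
          prHTrun ℛ pr (rs j) m ℛ₀ =
        if j ∈ M then PrS pr (ℛ₀ ∩ runsOf ℛ (K ℛ (rs j) m)) / PrS pr (runsOf ℛ (K ℛ r 0))
          else 0 := by
      intro j
      split_ifs with hjM
      · rw [prHTrun, div_mul_div_comm,
          mul_comm (PrS pr (runsOf ℛ (K ℛ r 0))) (PrS pr (runsOf ℛ (K ℛ (rs j) m))),
          mul_div_mul_left _ _ (ne_of_gt (hRjpos j))]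
      · rw [zero_mul]
    rw [Finset.sum_congr rfl fun j _ => this j, Finset.sum_ite_mem, Finset.univ_inter,
      ← Finset.sum_div, hcount ℛ₀ h₀]


end SBP
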